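/- arXiv:2209.02844 — 3 statements merged into one kernel-verified Lean document; each statement's English description precedes it below -/
import Mathlib

section
/- Suppose the distribution μ has finite mean m = E[S_1] = Σ_{s=1}^{∞} s·μ_s < ∞ and that the greatest common divisor of the support {s ≥ 1 : μ_s > 0} equals 1. Then lim_{n→∞} P[E_n] = 1/m. -/
/-!
Write `u n = P(E n)`, `f s = μ s` and `b t = P(S₁ > t)`, so that `∑ b = m`. Splitting at the
first renewal gives the renewal equation `u n = ∑_{s ≤ n} f s u (n - s)` for `n ≥ 1`, and
splitting at the last renewal before `n` gives `∑_{j ≤ n} b j u (n - j) = 1`.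

Take an ultrafilter along which `u` tends to `limsup u` (resp. `liminf u`); by compactness every
shift `u (n - t)` tends to some `v t` along it. Then `v` is `f`-harmonic and attains its maximum
(resp. minimum) at `0`, so the maximum principle propagates `v t = v 0` along the additive
monoid generated by the support of `f`, which contains all large integers by the gcd condition.
The last-renewal identity in the limit then reads `m · v 0 = 1`, so `limsup u = liminf u = 1/m`.
-/

open MeasureTheory ProbabilityTheory Filter Topology

theorem AddSubmonoid.closure_induction_add_right {M : Type*} [AddMonoid M] {s : Set M}
    {p : M → Prop} (hp : ∀ t, p t → ∀ x ∈ s, p (t + x)) {t x : M} (ht : p t)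
    (hx : x ∈ AddSubmonoid.closure s) : p (t + x) := by
  induction hx using AddSubmonoid.closure_induction generalizing t with
  | mem x hx => exact hp t ht x hx
  | zero => simpa using ht
  | add x y _ _ ihx ihy => simpa only [add_assoc] using ihy (ihx ht)

theorem eq_of_tsum_mul_eq_of_le {ι : Type*} {f w : ι → ℝ} {c : ℝ} (hf0 : ∀ i, 0 ≤ f i)
    (hf : HasSum f 1) (hw : Summable fun i => f i * w i) (hle : ∀ i, w i ≤ c)
    (heq : ∑' i, f i * w i = c) {i : ι} (hi : 0 < f i) : w i = c := by
  have hsum : HasSum (fun i => f i * (c - w i)) 0 := by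
    simpa [mul_sub, heq] using (hf.mul_right c).sub hw.hasSum
  have hzero := congrFun ((hasSum_zero_iff_of_nonneg fun i =>
    mul_nonneg (hf0 i) (sub_nonneg.2 (hle i))).1 hsum) i
  have := (mul_eq_zero.1 hzero).resolve_left hi.ne'
  linarith

theorem ENNReal.hasSum_toReal_of_tsum_eq {α : Type*} {f : α → ENNReal} {a : ENNReal}
    (h : ∑' x, f x = a) (ha : a ≠ ⊤) : HasSum (fun x => (f x).toReal) a.toReal := by
  have hsum := ENNReal.hasSum_toReal (h ▸ ha)
  rwa [← ENNReal.tsum_toReal_eq (ENNReal.ne_top_of_tsum_ne_top (h ▸ ha)), h] at hsum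

namespace MeasureTheory.Measure

theorem hasSum_toReal_measure_singleton (ν : Measure ℕ) [IsProbabilityMeasure ν] :
    HasSum (fun s => (ν {s}).toReal) 1 := by
  simpa using ENNReal.hasSum_toReal_of_tsum_eq
    (by simpa using ν.tsum_indicator_apply_singleton Set.univ .univ) ENNReal.one_ne_top

theorem tsum_measure_Ioi_eq_tsum_mul (ν : Measure ℕ) :
    ∑' t, ν (Set.Ioi t) = ∑' s : ℕ, (s : ENNReal) * ν {s} := by
  calc ∑' t, ν (Set.Ioi t) = ∑' t, ∑' s, (Set.Ioi t).indicator (fun s => ν {s}) s :=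
        tsum_congr fun t => (ν.tsum_indicator_apply_singleton _ measurableSet_Ioi).symm
    _ = ∑' s, ∑' t, if t < s then ν {s} else 0 := by
        rw [ENNReal.tsum_comm]
        simp only [Set.indicator_apply, Set.mem_Ioi]
    _ = ∑' s : ℕ, (s : ENNReal) * ν {s} := by
        refine tsum_congr fun s => ?_
        rw [tsum_eq_sum (s := Finset.range s) fun t ht => if_neg (by simpa using ht)]
        simp [Finset.sum_ite_of_true (fun t ht => Finset.mem_range.1 ht)]

theorem hasSum_toReal_measure_Ioi (ν : Measure ℕ) [IsFiniteMeasure ν]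
    (hmean : Summable fun s : ℕ => (s : ℝ) * (ν {s}).toReal) :
    HasSum (fun t => (ν (Set.Ioi t)).toReal) (∑' s : ℕ, (s : ℝ) * (ν {s}).toReal) := by
  have hofReal : ∑' s : ℕ, (s : ENNReal) * ν {s} =
      ENNReal.ofReal (∑' s : ℕ, (s : ℝ) * (ν {s}).toReal) := by
    rw [ENNReal.ofReal_tsum_of_nonneg (fun s => by positivity) hmean]
    simp [ENNReal.ofReal_mul, ENNReal.ofReal_toReal (measure_ne_top ν _)]
  simpa [tsum_nonneg fun s => (by positivity : (0 : ℝ) ≤ s * (ν {s}).toReal)] using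
    ENNReal.hasSum_toReal_of_tsum_eq (ν.tsum_measure_Ioi_eq_tsum_mul.trans hofReal)
      ENNReal.ofReal_ne_top

end MeasureTheory.Measure

section RenewalSequence

variable {f b u v : ℕ → ℝ} {m : ℝ}

theorem eventually_eq_of_forall_le_of_eq_tsum (hf0 : ∀ s, 0 ≤ f s) (hf : HasSum f 1)
    (hgcd : Nat.setGcd {s | 0 < f s} = 1) (hv : ∀ t, v t = ∑' s, f s * v (t + s))
    (hvs : ∀ t, Summable fun s => f s * v (t + s)) (hmax : ∀ t, v t ≤ v 0) :
    ∀ᶠ t in atTop, v t = v 0 := by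
  obtain ⟨N, hN⟩ := Nat.exists_mem_closure_of_ge {s | 0 < f s}
  refine eventually_atTop.2 ⟨N, fun t ht => ?_⟩
  simpa using AddSubmonoid.closure_induction_add_right (p := fun t => v t = v 0)
    (fun t ht s hs => eq_of_tsum_mul_eq_of_le hf0 hf (hvs t) (fun s => hmax _)
      (ht ▸ (hv t).symm) hs) rfl (hN t ht (by simp [hgcd]))

theorem eventually_eq_of_isExtr_of_eq_tsum (hf0 : ∀ s, 0 ≤ f s) (hf : HasSum f 1)
    (hgcd : Nat.setGcd {s | 0 < f s} = 1) (hv : ∀ t, v t = ∑' s, f s * v (t + s))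
    (hvs : ∀ t, Summable fun s => f s * v (t + s))
    (hext : (∀ t, v t ≤ v 0) ∨ ∀ t, v 0 ≤ v t) :
    ∀ᶠ t in atTop, v t = v 0 := by
  rcases hext with hmax | hmin
  · exact eventually_eq_of_forall_le_of_eq_tsum hf0 hf hgcd hv hvs hmax
  · have := eventually_eq_of_forall_le_of_eq_tsum (v := fun t => -v t) hf0 hf hgcd
      (fun t => by simp [hv t, tsum_neg]) (fun t => by simpa using (hvs t).neg)
      (fun t => neg_le_neg (hmin t))
    simpa using this

theorem tendsto_sum_range_mul_sub {l : Filter ℕ} (hl : l ≤ atTop) {a : ℕ → ℝ}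
    (ha0 : ∀ j, 0 ≤ a j) (ha : Summable a) (hu : ∀ n, |u n| ≤ 1)
    (hv : ∀ t, Tendsto (fun n => u (n - t)) l (𝓝 (v t))) (t : ℕ) :
    Tendsto (fun n => ∑ j ∈ Finset.range (n - t + 1), a j * u (n - t - j)) l
      (𝓝 (∑' j, a j * v (t + j))) := by
  have hsum : ∀ n, ∑ j ∈ Finset.range (n - t + 1), a j * u (n - t - j) =
      ∑' j, if j ≤ n - t then a j * u (n - (t + j)) else 0 := fun n => by
    rw [tsum_eq_sum (s := Finset.range (n - t + 1)) fun j hj => if_neg (by simpa using hj)]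
    exact Finset.sum_congr rfl fun j hj => by
      rw [if_pos (Nat.lt_succ_iff.1 (Finset.mem_range.1 hj)), Nat.sub_sub]
  simp_rw [hsum]
  refine tendsto_tsum_of_dominated_convergence ha (fun j => ?_) (.of_forall fun n j => ?_)
  · refine ((hv (t + j)).const_mul (a j)).congr' ?_
    filter_upwards [hl (eventually_ge_atTop (t + j))] with n hn
    rw [if_pos (by omega)]
  · split_ifs
    · simpa [abs_mul, abs_of_nonneg (ha0 j)] using
        mul_le_of_le_one_right (ha0 j) (hu (n - (t + j)))
    · simpa using ha0 j

theorem exists_tendsto_sub (hu : ∀ n, |u n| ≤ 1) (U : Ultrafilter ℕ) :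
    ∃ v : ℕ → ℝ, ∀ t, Tendsto (fun n => u (n - t)) U (𝓝 (v t)) := by
  have hex : ∀ t, ∃ x ∈ Metric.closedBall (0 : ℝ) 1,
      Tendsto (fun n => u (n - t)) U (𝓝 x) := fun t =>
    (isCompact_closedBall 0 1).ultrafilter_le_nhds (U.map fun n => u (n - t))
      (le_principal_iff.2 (Ultrafilter.mem_map.2 (univ_mem' fun n => by simpa using hu (n - t))))
  choose v _ hv using hex
  exact ⟨v, hv⟩

theorem eq_tsum_of_tendsto_sub {l : Filter ℕ} [l.NeBot] (hl : l ≤ atTop)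
    (hf0 : ∀ s, 0 ≤ f s) (hf : Summable f) (hu : ∀ n, |u n| ≤ 1)
    (hren : ∀ n, 1 ≤ n → u n = ∑ s ∈ Finset.range (n + 1), f s * u (n - s))
    (hv : ∀ t, Tendsto (fun n => u (n - t)) l (𝓝 (v t))) (t : ℕ) :
    v t = ∑' s, f s * v (t + s) := by
  refine tendsto_nhds_unique (hv t) ((tendsto_sum_range_mul_sub hl hf0 hf hu hv t).congr' ?_)
  filter_upwards [hl (eventually_ge_atTop (t + 1))] with n hn
  exact (hren (n - t) (by omega)).symm

theorem mul_eq_one_of_tendsto_sub {l : Filter ℕ} [l.NeBot] (hl : l ≤ atTop) {c : ℝ}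
    (hb0 : ∀ j, 0 ≤ b j) (hb : HasSum b m) (hu : ∀ n, |u n| ≤ 1)
    (hid : ∀ n, ∑ j ∈ Finset.range (n + 1), b j * u (n - j) = 1)
    (hv : ∀ t, Tendsto (fun n => u (n - t)) l (𝓝 (v t))) (hc : ∀ᶠ t in atTop, v t = c) :
    m * c = 1 := by
  obtain ⟨N, hN⟩ := eventually_atTop.1 hc
  have hlim := tendsto_sum_range_mul_sub hl hb0 hb.summable hu hv N
  simp only [hid] at hlim
  rw [tendsto_nhds_unique tendsto_const_nhds hlim,
    tsum_congr fun j => by rw [hN (N + j) (Nat.le_add_right N j)], tsum_mul_right, hb.tsum_eq]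

theorem mul_eq_one_of_tendsto_ultrafilter (hf0 : ∀ s, 0 ≤ f s) (hf : HasSum f 1)
    (hgcd : Nat.setGcd {s | 0 < f s} = 1) (hu : ∀ n, |u n| ≤ 1)
    (hren : ∀ n, 1 ≤ n → u n = ∑ s ∈ Finset.range (n + 1), f s * u (n - s))
    (hb0 : ∀ j, 0 ≤ b j) (hb : HasSum b m)
    (hid : ∀ n, ∑ j ∈ Finset.range (n + 1), b j * u (n - j) = 1)
    {U : Ultrafilter ℕ} (hU : (U : Filter ℕ) ≤ atTop) {c : ℝ} (hc : Tendsto u U (𝓝 c))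
    (hext : (∀ x, MapClusterPt x atTop u → x ≤ c) ∨ ∀ x, MapClusterPt x atTop u → c ≤ x) :
    m * c = 1 := by
  obtain ⟨v, hv⟩ := exists_tendsto_sub hu U
  have hv0 : v 0 = c := tendsto_nhds_unique (hv 0) (by simpa using hc)
  have hvc : ∀ t, MapClusterPt (v t) atTop u := fun t =>
    (hv t).mapClusterPt.of_comp ((tendsto_sub_atTop_nat t).mono_left hU)
  have hvb : ∀ t, |v t| ≤ 1 := fun t =>
    le_of_tendsto ((hv t).abs) (.of_forall fun n => hu (n - t))
  refine mul_eq_one_of_tendsto_sub (l := (U : Filter ℕ)) hU hb0 hb hu hid hv (hv0 ▸ ?_)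
  refine eventually_eq_of_isExtr_of_eq_tsum hf0 hf hgcd
    (eq_tsum_of_tendsto_sub hU hf0 hf.summable hu hren hv)
    (fun t => hf.summable.of_norm_bounded fun s => ?_) (hext.imp (fun h t => ?_) fun h t => ?_)
  · simpa [abs_mul, abs_of_nonneg (hf0 s)] using mul_le_of_le_one_right (hf0 s) (hvb (t + s))
  · exact hv0 ▸ h _ (hvc t)
  · exact hv0 ▸ h _ (hvc t)

theorem tendsto_inv_of_renewal_equation (hf0 : ∀ s, 0 ≤ f s) (hf : HasSum f 1)
    (hgcd : Nat.setGcd {s | 0 < f s} = 1) (hu : ∀ n, |u n| ≤ 1)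
    (hren : ∀ n, 1 ≤ n → u n = ∑ s ∈ Finset.range (n + 1), f s * u (n - s))
    (hb0 : ∀ j, 0 ≤ b j) (hb : HasSum b m)
    (hid : ∀ n, ∑ j ∈ Finset.range (n + 1), b j * u (n - j) = 1) :
    Tendsto u atTop (𝓝 m⁻¹) := by
  have hle : IsBoundedUnder (· ≤ ·) atTop u :=
    isBoundedUnder_of ⟨1, fun n => (abs_le.1 (hu n)).2⟩
  have hge : IsBoundedUnder (· ≥ ·) atTop u :=
    isBoundedUnder_of ⟨-1, fun n => (abs_le.1 (hu n)).1⟩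
  have hextr : ∀ c, MapClusterPt c atTop u →
      ((∀ x, MapClusterPt x atTop u → x ≤ c) ∨ ∀ x, MapClusterPt x atTop u → c ≤ x) →
      c = m⁻¹ := fun c hc hext => by
    obtain ⟨U, hU, hcU⟩ := mapClusterPt_iff_ultrafilter.1 hc
    exact eq_inv_of_mul_eq_one_right
      (mul_eq_one_of_tendsto_ultrafilter hf0 hf hgcd hu hren hb0 hb hid hU hcU hext)
  exact tendsto_of_liminf_eq_limsup
    (hextr _ (.liminf hle.isCoboundedUnder_ge hge) (.inr fun x hx => hx.liminf_le hge))
    (hextr _ (.limsup hge.isCoboundedUnder_le hle) (.inl fun x hx => hx.le_limsup hle)) hle hge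

end RenewalSequence

section RenewalProcess

variable {Ω : Type*} {S : ℕ → Ω → ℕ}

def renewalTime (S : ℕ → Ω → ℕ) (K : ℕ) (ω : Ω) : ℕ := ∑ j ∈ Finset.range K, S j ω

def renewalSet (S : ℕ → Ω → ℕ) (n : ℕ) : Set Ω := {ω | ∃ K, renewalTime S K ω = n}

@[simp]
theorem renewalTime_zero (ω : Ω) : renewalTime S 0 ω = 0 := rfl

theorem renewalTime_succ (K : ℕ) (ω : Ω) :
    renewalTime S (K + 1) ω = renewalTime S K ω + S K ω :=
  Finset.sum_range_succ _ _

theorem strictMono_renewalTime (hpos : ∀ i ω, 0 < S i ω) (ω : Ω) :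
    StrictMono fun K => renewalTime S K ω :=
  strictMono_nat_of_lt_succ fun K => by
    rw [renewalTime_succ]
    exact Nat.lt_add_of_pos_right (hpos K ω)

theorem renewalTime_succ_preimage (n K : ℕ) :
    renewalTime S (K + 1) ⁻¹' {n} =
      ⋃ i ∈ Finset.range (n + 1), renewalTime S K ⁻¹' {n - i} ∩ S K ⁻¹' {i} := by
  ext ω
  simp only [Set.mem_preimage, Set.mem_singleton_iff, Set.mem_iUnion, Set.mem_inter_iff,
    Finset.mem_range, renewalTime_succ, exists_prop]
  constructor
  · intro h
    exact ⟨S K ω, by omega, by omega, rfl⟩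
  · rintro ⟨i, hi, h, rfl⟩
    omega

theorem setOf_mem_Ico_renewalTime (n K : ℕ) :
    {ω | n ∈ Set.Ico (renewalTime S K ω) (renewalTime S (K + 1) ω)} =
      ⋃ i ∈ Finset.range (n + 1), renewalTime S K ⁻¹' {n - i} ∩ S K ⁻¹' Set.Ioi i := by
  ext ω
  simp only [Set.mem_ofPred_eq, Set.mem_Ico, Set.mem_preimage, Set.mem_singleton_iff,
    Set.mem_iUnion, Set.mem_inter_iff, Set.mem_Ioi, Finset.mem_range, renewalTime_succ,
    exists_prop]
  constructor
  · intro h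
    exact ⟨n - renewalTime S K ω, by omega, by omega, by omega⟩
  · rintro ⟨i, hi, h, hS⟩
    omega

variable [MeasurableSpace Ω] {P : Measure Ω}

theorem measurable_renewalTime (hmeas : ∀ i, Measurable (S i)) (K : ℕ) :
    Measurable (renewalTime S K) :=
  Finset.measurable_sum _ fun i _ => hmeas i

theorem indepFun_renewalTime (hmeas : ∀ i, Measurable (S i)) (hindep : iIndepFun S P)
    (K : ℕ) : IndepFun (renewalTime S K) (S K) P := by
  convert hindep.indepFun_sum_range_succ hmeas K
  ext ω
  simp [renewalTime]

theorem measure_renewalSet (hmeas : ∀ i, Measurable (S i)) (hpos : ∀ i ω, 0 < S i ω)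
    (n : ℕ) : P (renewalSet S n) = ∑' K, P (renewalTime S K ⁻¹' {n}) := by
  have hunion : renewalSet S n = ⋃ K, renewalTime S K ⁻¹' {n} := by ext; simp [renewalSet]
  rw [hunion, measure_iUnion _ fun K => measurable_renewalTime hmeas K (measurableSet_singleton n)]
  intro K K' hK
  exact Set.disjoint_left.2 fun ω h h' =>
    hK ((strictMono_renewalTime hpos ω).injective (h.trans h'.symm))

theorem measure_biUnion_renewalTime_inter (hmeas : ∀ i, Measurable (S i))
    (hindep : iIndepFun S P) (hident : ∀ i, IdentDistrib (S i) (S 0) P P)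
    (n K : ℕ) (A : ℕ → Set ℕ) :
    P (⋃ i ∈ Finset.range (n + 1), renewalTime S K ⁻¹' {n - i} ∩ S K ⁻¹' A i) =
      ∑ i ∈ Finset.range (n + 1), P (renewalTime S K ⁻¹' {n - i}) * P (S 0 ⁻¹' A i) := by
  rw [measure_biUnion_finset]
  · refine Finset.sum_congr rfl fun i _ => ?_
    rw [(indepFun_renewalTime hmeas hindep K).measure_inter_preimage_eq_mul _ _
      (measurableSet_singleton _) (.of_discrete), (hident K).measure_mem_eq .of_discrete]
  · intro i hi i' hi' hii'
    refine Set.disjoint_left.2 fun ω h h' => hii' ?_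
    have : n - i = n - i' := h.1.symm.trans h'.1
    simp only [Finset.coe_range, Set.mem_Iio] at hi hi'
    omega
  · exact fun i _ => (measurable_renewalTime hmeas K (measurableSet_singleton _)).inter
      (hmeas K .of_discrete)

theorem measure_renewalSet_eq_sum (hmeas : ∀ i, Measurable (S i)) (hindep : iIndepFun S P)
    (hident : ∀ i, IdentDistrib (S i) (S 0) P P) (hpos : ∀ i ω, 0 < S i ω) {n : ℕ}
    (hn : 1 ≤ n) :
    P (renewalSet S n) =
      ∑ i ∈ Finset.range (n + 1), P (S 0 ⁻¹' {i}) * P (renewalSet S (n - i)) := by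
  have hzero : renewalTime S 0 ⁻¹' {n} = ∅ := by
    ext ω
    simp only [Set.mem_preimage, renewalTime_zero, Set.mem_singleton_iff,
      Set.mem_empty_iff_false, iff_false]
    omega
  calc P (renewalSet S n) = ∑' K, P (renewalTime S (K + 1) ⁻¹' {n}) := by
        rw [measure_renewalSet hmeas hpos, tsum_eq_zero_add' ENNReal.summable, hzero,
          measure_empty, zero_add]
    _ = ∑ i ∈ Finset.range (n + 1),
          (∑' K, P (renewalTime S K ⁻¹' {n - i})) * P (S 0 ⁻¹' {i}) := by
        simp_rw [renewalTime_succ_preimage, measure_biUnion_renewalTime_inter hmeas hindep hident,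
          ← ENNReal.tsum_mul_right]
        exact Summable.tsum_finsetSum fun _ _ => ENNReal.summable
    _ = ∑ i ∈ Finset.range (n + 1), P (S 0 ⁻¹' {i}) * P (renewalSet S (n - i)) := by
        simp_rw [measure_renewalSet hmeas hpos, mul_comm]

theorem sum_measure_Ioi_mul_measure_renewalSet [IsProbabilityMeasure P]
    (hmeas : ∀ i, Measurable (S i)) (hindep : iIndepFun S P)
    (hident : ∀ i, IdentDistrib (S i) (S 0) P P) (hpos : ∀ i ω, 0 < S i ω) (n : ℕ) :
    ∑ i ∈ Finset.range (n + 1), P (S 0 ⁻¹' Set.Ioi i) * P (renewalSet S (n - i)) = 1 := by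
  -- `G K`: the `K`-th renewal is the last one at or before time `n`.
  set G : ℕ → Set Ω :=
    fun K => {ω | n ∈ Set.Ico (renewalTime S K ω) (renewalTime S (K + 1) ω)}
  have hcover : ⋃ K, G K = Set.univ := by
    refine Set.eq_univ_of_forall fun ω => ?_
    have h := iUnion_Ico_map_succ_eq_Ici (fun K => (strictMono_renewalTime hpos ω).monotone
      (Nat.zero_le K)) (strictMono_renewalTime hpos ω).not_bddAbove_range_of_wellFoundedLT
    simpa [G, Set.ext_iff] using Set.ext_iff.1 h n
  have hdisj : Pairwise (Function.onFun Disjoint G) := fun K K' hK =>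
    Set.disjoint_left.2 fun ω h h' => Set.disjoint_left.1
      ((strictMono_renewalTime hpos ω).monotone.pairwise_disjoint_on_Ico_succ hK) h h'
  have hmeasG : ∀ K, MeasurableSet (G K) := fun K =>
    (measurable_renewalTime hmeas K).prodMk (measurable_renewalTime hmeas (K + 1))
      (MeasurableSet.of_discrete (s := {p : ℕ × ℕ | n ∈ Set.Ico p.1 p.2}))
  calc ∑ i ∈ Finset.range (n + 1), P (S 0 ⁻¹' Set.Ioi i) * P (renewalSet S (n - i))
      = ∑' K, ∑ i ∈ Finset.range (n + 1),
          P (renewalTime S K ⁻¹' {n - i}) * P (S 0 ⁻¹' Set.Ioi i) := by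
        simp_rw [measure_renewalSet hmeas hpos, mul_comm (P (S 0 ⁻¹' _)),
          ← ENNReal.tsum_mul_right]
        exact (Summable.tsum_finsetSum fun _ _ => ENNReal.summable).symm
    _ = ∑' K, P (G K) := by
        simp_rw [G, setOf_mem_Ico_renewalTime,
          measure_biUnion_renewalTime_inter hmeas hindep hident]
    _ = 1 := by rw [← measure_iUnion hdisj hmeasG, hcover, measure_univ]

end RenewalProcess

/-- If `μ` has finite mean `m = ∑_{s≥1} s μ_s < ∞` and the gcd of the
support `{s ≥ 1 : μ_s > 0}` equals `1`, then `lim_{n→∞} P[E_n] = 1/m`. -/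
theorem esc_renewal_theorem
    {Ω : Type*} [MeasurableSpace Ω] (P : Measure Ω) [IsProbabilityMeasure P]
    (S : ℕ → Ω → ℕ)
    (hmeas : ∀ i, Measurable (S i))
    (hindep : iIndepFun S P)
    (hident : ∀ i, IdentDistrib (S i) (S 0) P P)
    (hpos : ∀ i ω, 0 < S i ω)
    (μ : ℕ → ℝ)
    (hμ : ∀ s, μ s = (P {ω | S 0 ω = s}).toReal)
    (E : ℕ → Set Ω)
    (hE : ∀ n, E n = {ω | ∃ K, ∑ j ∈ Finset.range K, S j ω = n})
    (hmean : Summable (fun s : ℕ => (s : ℝ) * μ s))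
    (hgcd : ∀ d : ℕ, (∀ s : ℕ, 0 < μ s → d ∣ s) → d = 1) :
    Tendsto (fun n : ℕ => (P (E n)).toReal) atTop
      (nhds (1 / ∑' s : ℕ, (s : ℝ) * μ s)) := by
  have : IsProbabilityMeasure (P.map (S 0)) :=
    Measure.isProbabilityMeasure_map (hmeas 0).aemeasurable
  have hlaw : ∀ A, P (S 0 ⁻¹' A) = P.map (S 0) A := fun A =>
    (Measure.map_apply (hmeas 0) .of_discrete).symm
  obtain rfl : μ = fun s => (P.map (S 0) {s}).toReal :=
    funext fun s => (hμ s).trans (congrArg ENNReal.toReal (hlaw {s}))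
  obtain rfl : E = renewalSet S := funext hE
  rw [one_div]
  refine tendsto_inv_of_renewal_equation (b := fun t => (P (S 0 ⁻¹' Set.Ioi t)).toReal)
    (fun s => ENNReal.toReal_nonneg) (Measure.hasSum_toReal_measure_singleton _)
    (hgcd _ fun s hs => Nat.dvd_setGcd_iff.1 dvd_rfl s hs)
    (fun n => by rw [abs_of_nonneg ENNReal.toReal_nonneg]; exact measureReal_le_one)
    (fun n hn => ?renewal) (fun t => ENNReal.toReal_nonneg)
    (by simpa only [hlaw] using (P.map (S 0)).hasSum_toReal_measure_Ioi hmean) (fun n => ?identity)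
  case renewal =>
    rw [measure_renewalSet_eq_sum hmeas hindep hident hpos hn,
      ENNReal.toReal_sum fun _ _ => by finiteness]
    simp [hlaw]
  case identity =>
    rw [← ENNReal.toReal_one, ← sum_measure_Ioi_mul_measure_renewalSet hmeas hindep hident hpos n,
      ENNReal.toReal_sum fun _ _ => by finiteness]
    simp
end

section
/- For every integer n ≥ 1, P[E_n] = Σ_{k=1}^{n} B̂_{n,k}(μ), where B̂_{n,k}(μ) = Σ (k!/(j_1! j_2! ⋯ j_{n−k+1}!)) ∏_{i=1}^{n−k+1} μ_i^{j_i}, the sum ranging over all nonnegative integers j_1, …, j_{n−k+1} satisfying Σ_{i=1}^{n−k+1} j_i = k and Σ_{i=1}^{n−k+1} i·j_i = n. -/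
/-!
Because the steps are positive, `E n` is the disjoint union over `1 ≤ k ≤ n` of the events
`S 0 + ⋯ + S (k - 1) = n`, and by independence the `k`-th one has probability
`∑ ∏ j, μ (s j)` over the compositions `s` of `n` into `k` parts. Grouping compositions by the
multiplicities of their parts gives `B̂_{n,k}(μ)`: both are the coefficient of `X ^ n` in
`(∑ i, μ i X ^ i) ^ k`, expanded once as a product of sums and once by the multinomial theorem.
-/

open Finset Polynomial MeasureTheory ProbabilityTheory

section Compositions

variable {R ι : Type*} [CommSemiring R] [Fintype ι] (a : ι → R) (d : ι → ℕ) (k n : ℕ)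

theorem coeff_pow_sum_C_mul_X_pow_eq_sum_fun :
    ((∑ i, C (a i) * X ^ d i) ^ k).coeff n
      = ∑ f : Fin k → ι with ∑ j, d (f j) = n, ∏ j, a (f j) := by
  rw [Fintype.sum_pow, finsetSum_coeff, sum_filter]
  refine sum_congr rfl fun f _ => ?_
  simp_rw [prod_mul_distrib, ← map_prod, prod_pow_eq_pow_sum, coeff_C_mul_X_pow, @eq_comm _ n]

theorem coeff_pow_sum_C_mul_X_pow_eq_sum_multinomial [DecidableEq ι] :
    ((∑ i, C (a i) * X ^ d i) ^ k).coeff n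
      = ∑ J ∈ piAntidiag univ k with ∑ i, d i * J i = n,
          (Nat.multinomial univ J : R) * ∏ i, a i ^ J i := by
  rw [sum_pow_eq_sum_piAntidiag, finsetSum_coeff, sum_filter]
  refine sum_congr rfl fun J _ => ?_
  simp_rw [mul_pow, ← map_pow, ← pow_mul, prod_mul_distrib, ← map_prod, prod_pow_eq_pow_sum,
    ← C_eq_natCast, ← mul_assoc, ← map_mul, coeff_C_mul_X_pow, @eq_comm _ n]

theorem sum_prod_fun_eq_sum_multinomial [DecidableEq ι] :
    ∑ f : Fin k → ι with ∑ j, d (f j) = n, ∏ j, a (f j)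
      = ∑ J ∈ piAntidiag univ k with ∑ i, d i * J i = n,
          (Nat.multinomial univ J : R) * ∏ i, a i ^ J i := by
  rw [← coeff_pow_sum_C_mul_X_pow_eq_sum_fun, coeff_pow_sum_C_mul_X_pow_eq_sum_multinomial]

end Compositions

theorem Nat.cast_multinomial_eq_div {K ι : Type*} [Field K] [CharZero K] (s : Finset ι)
    (f : ι → ℕ) :
    (Nat.multinomial s f : K) = (∑ i ∈ s, f i).factorial / ∏ i ∈ s, ((f i).factorial : K) := by
  rw [eq_div_iff (prod_ne_zero_iff.2 fun i _ => Nat.cast_ne_zero.2 (Nat.factorial_ne_zero _)),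
    ← Nat.cast_prod, ← Nat.cast_mul, mul_comm, Nat.multinomial_spec]

theorem Finset.add_card_sub_one_le_sum {ι : Type*} [DecidableEq ι] {s : Finset ι} {g : ι → ℕ}
    (hg : ∀ i ∈ s, 1 ≤ g i) {j : ι} (hj : j ∈ s) : g j + (#s - 1) ≤ ∑ i ∈ s, g i := by
  have hrest := card_nsmul_le_sum (s.erase j) g 1 fun i hi => hg i (mem_of_mem_erase hi)
  rw [← add_sum_erase s g hj, ← card_erase_of_mem hj]
  simpa using hrest

/-- The ordinary Bell polynomial `B̂_{n,k}(μ)`; `J i` is the multiplicity of the part `i + 1`. -/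
noncomputable def ordinaryBell {K : Type*} [Field K] (μ : ℕ → K) (n k : ℕ) : K :=
  ∑ J ∈ Finset.filter
      (fun J : Fin (n - k + 1) → ℕ => (∑ i, J i = k) ∧ ∑ i, (i.val + 1) * J i = n)
      (Fintype.piFinset fun _ => Finset.range (k + 1)),
    ((k.factorial : K) / ∏ i, ((J i).factorial : K)) * ∏ i, μ (i.val + 1) ^ J i

theorem ordinaryBell_eq_sum_fun {K : Type*} [Field K] [CharZero K] (μ : ℕ → K) (n k : ℕ) :
    ordinaryBell μ n k
      = ∑ f : Fin k → Fin (n - k + 1) with ∑ j, ((f j : ℕ) + 1) = n, ∏ j, μ (f j + 1) := by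
  rw [sum_prod_fun_eq_sum_multinomial (fun i : Fin (n - k + 1) => μ (i + 1)) (fun i => i + 1)]
  refine sum_congr (ext fun J => ?_) fun J hJ => ?_
  · simp only [mem_filter, mem_piAntidiag, Fintype.mem_piFinset, mem_range, mem_univ,
      implies_true, and_true]
    exact and_iff_right_of_imp fun h i =>
      Nat.lt_succ_of_le (h.1 ▸ single_le_sum (fun _ _ => Nat.zero_le _) (mem_univ i))
  · rw [Nat.cast_multinomial_eq_div, (mem_piAntidiag.1 (mem_filter.1 hJ).1).1]

theorem sum_piAntidiag_prod_eq_ordinaryBell {K : Type*} [Field K] [CharZero K] {μ : ℕ → K}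
    (hμ0 : μ 0 = 0) (n k : ℕ) :
    ∑ g ∈ piAntidiag (univ : Finset (Fin k)) n, ∏ j, μ (g j) = ordinaryBell μ n k := by
  set shift : (Fin k → Fin (n - k + 1)) → Fin k → ℕ := fun f j => f j + 1
  have hshift : Function.Injective shift := fun f f' h =>
    funext fun j => Fin.ext (by simpa [shift] using congrFun h j)
  rw [ordinaryBell_eq_sum_fun]
  symm
  calc _ = ∑ g ∈ (univ.filter fun f : Fin k → Fin (n - k + 1) =>
              ∑ j, ((f j : ℕ) + 1) = n).image shift, ∏ j, μ (g j) :=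
        (sum_image fun f _ f' _ h => hshift h).symm
    _ = _ := sum_subset (fun g hg => ?_) fun g hg hgn => ?_
  · obtain ⟨f, hf, rfl⟩ := mem_image.1 hg
    simpa using (mem_filter.1 hf).2
  · -- a composition with positive parts has all parts `≤ n - k + 1`, so it lies in the image
    obtain ⟨j, hj⟩ : ∃ j, g j = 0 := by
      by_contra! hne
      have hpos j : 1 ≤ g j := Nat.one_le_iff_ne_zero.2 (hne j)
      have hsum : ∑ i, g i = n := (mem_piAntidiag.1 hg).1
      have hle j : g j + (k - 1) ≤ n := by
        simpa [hsum] using add_card_sub_one_le_sum (fun i _ => hpos i) (mem_univ j)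
      refine hgn (mem_image.2 ⟨fun j => ⟨g j - 1, by have := hle j; omega⟩, ?_, ?_⟩) <;>
        simp [shift, Nat.sub_add_cancel (hpos _), hsum]
    exact prod_eq_zero (mem_univ j) (by rw [hj, hμ0])

section IIDSum

variable {Ω : Type*} [MeasurableSpace Ω] {P : Measure Ω} {S : ℕ → Ω → ℕ}

theorem measureReal_forall_eq_eq_prod (hindep : iIndepFun S P)
    (hident : ∀ i, IdentDistrib (S i) (S 0) P P) {k : ℕ} (f : Fin k → ℕ) :
    P.real {ω | ∀ j : Fin k, S j ω = f j} = ∏ j, P.real {ω | S 0 ω = f j} := by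
  have hcyl : {ω | ∀ j : Fin k, S j ω = f j} = ⋂ j ∈ univ, (fun j : Fin k => S j) j ⁻¹' {f j} := by
    ext ω; simp
  rw [measureReal_def, hcyl, (hindep.precomp Fin.val_injective).measure_inter_preimage_eq_mul univ
    fun j _ => measurableSet_singleton (f j), ENNReal.toReal_prod]
  refine prod_congr rfl fun j _ => ?_
  exact congrArg ENNReal.toReal ((hident j).measure_mem_eq (measurableSet_singleton (f j)))

theorem measureReal_mem_finset_eq_sum_prod [IsFiniteMeasure P] (hmeas : ∀ i, Measurable (S i))
    (hindep : iIndepFun S P) (hident : ∀ i, IdentDistrib (S i) (S 0) P P) {k : ℕ}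
    (F : Finset (Fin k → ℕ)) :
    P.real {ω | (fun j : Fin k => S j ω) ∈ F} = ∑ f ∈ F, ∏ j, P.real {ω | S 0 ω = f j} := by
  have hX : Measurable fun ω (j : Fin k) => S j ω := measurable_pi_lambda _ fun j => hmeas j
  change P.real ((fun ω (j : Fin k) => S j ω) ⁻¹' F) = _
  rw [← sum_measureReal_preimage_singleton F fun f _ => hX (measurableSet_singleton f)]
  refine sum_congr rfl fun f _ => ?_
  simp only [Set.preimage, Set.mem_singleton_iff, funext_iff]
  exact measureReal_forall_eq_eq_prod hindep hident f

theorem measureReal_sum_range_eq_sum_piAntidiag [IsFiniteMeasure P]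
    (hmeas : ∀ i, Measurable (S i)) (hindep : iIndepFun S P) (hident : ∀ i, IdentDistrib (S i) (S 0) P P) (k n : ℕ) :
    P.real {ω | ∑ j ∈ range k, S j ω = n}
      = ∑ g ∈ piAntidiag (univ : Finset (Fin k)) n, ∏ j, P.real {ω | S 0 ω = g j} := by
  rw [← measureReal_mem_finset_eq_sum_prod hmeas hindep hident]
  congr 1
  ext ω
  simp [Fin.sum_univ_eq_sum_range (S · ω)]

end IIDSum

theorem strictMono_sum_range_of_pos {s : ℕ → ℕ} (hs : ∀ j, 0 < s j) :
    StrictMono fun K => ∑ j ∈ range K, s j :=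
  strictMono_nat_of_lt_succ fun K => by rw [sum_range_succ]; exact Nat.lt_add_of_pos_right (hs K)

theorem le_sum_range_of_pos {s : ℕ → ℕ} (hs : ∀ j, 0 < s j) (K : ℕ) :
    K ≤ ∑ j ∈ range K, s j := by
  simpa using card_nsmul_le_sum (range K) s 1 fun j _ => hs j

theorem exists_sum_range_eq_iff_of_pos {s : ℕ → ℕ} (hs : ∀ j, 0 < s j) {n : ℕ} (hn : 1 ≤ n) :
    (∃ K, ∑ j ∈ range K, s j = n) ↔ ∃ K ∈ Icc 1 n, ∑ j ∈ range K, s j = n := by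
  refine ⟨fun ⟨K, hK⟩ => ⟨K, mem_Icc.2 ⟨?_, hK ▸ le_sum_range_of_pos hs K⟩, hK⟩,
    fun ⟨K, _, hK⟩ => ⟨K, hK⟩⟩
  refine Nat.one_le_iff_ne_zero.2 ?_
  rintro rfl
  simp at hK
  omega

/-- For every integer `n ≥ 1`, `P[E_n] = ∑_{k=1}^n B̂_{n,k}(μ)`, where
`B̂_{n,k}(μ)` is the ordinary Bell polynomial
`∑ (k!/(j_1!⋯j_{n−k+1}!)) ∏_i μ_i^{j_i}` over all nonnegative integers
`j_1,…,j_{n−k+1}` with `∑ j_i = k` and `∑ i·j_i = n`. -/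
theorem esc_prob_event_eq_sum_bell
    {Ω : Type*} [MeasurableSpace Ω] (P : Measure Ω) [IsProbabilityMeasure P]
    (S : ℕ → Ω → ℕ)
    (hmeas : ∀ i, Measurable (S i))
    (hindep : iIndepFun S P)
    (hident : ∀ i, IdentDistrib (S i) (S 0) P P)
    (hpos : ∀ i ω, 0 < S i ω)
    (μ : ℕ → ℝ)
    (hμ : ∀ s, μ s = (P {ω | S 0 ω = s}).toReal)
    (E : ℕ → Set Ω)
    (hE : ∀ n, E n = {ω | ∃ K, ∑ j ∈ Finset.range K, S j ω = n})
    (n : ℕ) (hn : 1 ≤ n) :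
    (P (E n)).toReal
      = ∑ k ∈ Finset.Icc 1 n,
          ∑ J ∈ Finset.filter
            (fun J : Fin (n - k + 1) → ℕ =>
              (∑ i, J i = k) ∧ ∑ i, (i.val + 1) * J i = n)
            (Fintype.piFinset fun _ => Finset.range (k + 1)),
            ((k.factorial : ℝ) / ∏ i, ((J i).factorial : ℝ)) *
              ∏ i, μ (i.val + 1) ^ J i := by
  have hμ0 : μ 0 = 0 := by simp [hμ, fun ω => (hpos 0 ω).ne']
  have hEn : E n = ⋃ k ∈ Icc 1 n, {ω | ∑ j ∈ range k, S j ω = n} := by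
    ext ω
    simp only [hE, Set.mem_ofPred_eq, Set.mem_iUnion, exists_prop,
      exists_sum_range_eq_iff_of_pos (hpos · ω) hn]
  have hdisj : (Icc 1 n : Set ℕ).PairwiseDisjoint fun k => {ω | ∑ j ∈ range k, S j ω = n} :=
    fun k _ k' _ hne => Set.disjoint_left.2 fun ω h h' =>
      hne ((strictMono_sum_range_of_pos (hpos · ω)).injective (h.trans h'.symm))
  change P.real (E n) = ∑ k ∈ Icc 1 n, ordinaryBell μ n k
  rw [hEn, measureReal_biUnion_finset hdisj fun k _ =>
    (Finset.measurable_sum _ fun j _ => hmeas j) (measurableSet_singleton n)]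
  refine sum_congr rfl fun k _ => ?_
  rw [measureReal_sum_range_eq_sum_piAntidiag hmeas hindep hident,
    ← sum_piAntidiag_prod_eq_ordinaryBell hμ0]
  simp only [hμ, measureReal_def]
end

section
/- Suppose the cluster size distribution is a shifted negative binomial: μ_k = C(k+r−2, k−1) (1−p)^r p^{k−1} for k ≥ 1 and μ_0 = 0, where p ∈ (0,1), r > 0 is real, and C(t, m) = (t)_m / m! with (t)_m = t(t−1)⋯(t−m+1) the falling factorial. Then for all integers 1 ≤ k ≤ n, P[K_n = k | E_n] = p^{n−k} (1−p)^{rk} C(n + k(r−1) − 1, n−k) / P[E_n]. -/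
/-!
The generating function of the shifted negative binomial law is `(1 - p)^r X (1 - p X)^(-r)`.
By independence, the generating function of `S_1 + ⋯ + S_k` is its `k`-th power
`(1 - p)^(r k) X^k (1 - p X)^(-r k)`, whose `n`-th coefficient is the claimed numerator; the
event `K_n = k` lies inside `E_n`, so conditioning only divides by `P[E_n]`.
-/

open MeasureTheory ProbabilityTheory

/-- Generalized binomial coefficient `C(t, m) = t(t−1)⋯(t−m+1)/m!` for real `t`
and natural `m`. -/
noncomputable def genChoose (t : ℝ) (m : ℕ) : ℝ :=
  (∏ i ∈ Finset.range m, (t - i)) / m.factorial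

open PowerSeries Finset

lemma genChoose_eq_ringChoose (t : ℝ) (m : ℕ) : genChoose t m = Ring.choose t m := by
  rw [genChoose, Ring.choose_eq_smul, ← Polynomial.aeval_eq_smeval, Polynomial.aeval_def,
    ← Polynomial.eval_map, descPochhammer_map, descPochhammer_eval_eq_prod_range, smul_eq_mul,
    div_eq_inv_mul]

noncomputable def negBinSeries (p s : ℝ) : ℝ⟦X⟧ := rescale (-p) (binomialSeries ℝ (-s))

lemma coeff_negBinSeries (p s : ℝ) (n : ℕ) :
    coeff n (negBinSeries p s) = genChoose (s + n - 1) n * p ^ n := by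
  rw [negBinSeries, coeff_rescale, binomialSeries_coeff, Ring.choose_neg, genChoose_eq_ringChoose,
    smul_eq_mul, mul_one, Units.smul_def, Int.coe_negOnePow_natCast, zsmul_eq_mul]
  push_cast
  rw [← mul_assoc, ← mul_pow, neg_mul_neg, mul_one, mul_comm]

lemma negBinSeries_add (p s t : ℝ) :
    negBinSeries p (s + t) = negBinSeries p s * negBinSeries p t := by
  simp only [negBinSeries, neg_add, binomialSeries_add, map_mul]

lemma negBinSeries_pow (p s : ℝ) (k : ℕ) : negBinSeries p s ^ k = negBinSeries p (k * s) := by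
  induction k with
  | zero => simp [negBinSeries]
  | succ k ih => rw [pow_succ, ih, ← negBinSeries_add, Nat.cast_succ, add_one_mul]

noncomputable def shiftedNegBinSeries (p r : ℝ) : ℝ⟦X⟧ := C ((1 - p) ^ r) * X * negBinSeries p r

lemma coeff_shiftedNegBinSeries_pow (p r : ℝ) {n k : ℕ} (hkn : k ≤ n) :
    coeff n (shiftedNegBinSeries p r ^ k) =
      p ^ (n - k) * ((1 - p) ^ r) ^ k * genChoose (n + k * (r - 1) - 1) (n - k) := by
  rw [shiftedNegBinSeries, mul_pow, mul_pow, ← map_pow, negBinSeries_pow, mul_assoc, coeff_C_mul,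
    coeff_X_pow_mul', if_pos hkn, coeff_negBinSeries, Nat.cast_sub hkn]
  ring_nf

namespace ProbabilityTheory

variable {Ω : Type*} [MeasurableSpace Ω]

noncomputable def pgfSeries (N : Ω → ℕ) (P : Measure Ω) : ℝ⟦X⟧ :=
  mk fun n => P.real {ω | N ω = n}

@[simp]
lemma coeff_pgfSeries (N : Ω → ℕ) (P : Measure Ω) (n : ℕ) :
    coeff n (pgfSeries N P) = P.real {ω | N ω = n} :=
  coeff_mk _ _

lemma pgfSeries_zero (P : Measure Ω) [IsProbabilityMeasure P] : pgfSeries 0 P = 1 := by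
  ext n
  rcases eq_or_ne n 0 with rfl | hn
  · simp
  · simp [coeff_one, hn, eq_comm (a := 0)]

lemma IdentDistrib.pgfSeries_eq {Ω' : Type*} [MeasurableSpace Ω'] {N : Ω → ℕ} {M : Ω' → ℕ}
    {P : Measure Ω} {Q : Measure Ω'} (h : IdentDistrib N M P Q) :
    pgfSeries N P = pgfSeries M Q := by
  refine PowerSeries.ext fun n => ?_
  rw [coeff_pgfSeries, coeff_pgfSeries]
  exact congrArg ENNReal.toReal (h.measure_mem_eq (measurableSet_singleton n))

lemma IndepFun.pgfSeries_add {N M : Ω → ℕ} {P : Measure Ω} [IsFiniteMeasure P]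
    (hN : Measurable N) (hM : Measurable M) (h : IndepFun N M P) :
    pgfSeries (N + M) P = pgfSeries N P * pgfSeries M P := by
  refine PowerSeries.ext fun n => ?_
  have hunion : {ω | (N + M) ω = n} =
      ⋃ ij ∈ antidiagonal n, {ω | N ω = ij.1} ∩ {ω | M ω = ij.2} := by
    ext ω
    simp
  have hdisj : (antidiagonal n : Set (ℕ × ℕ)).PairwiseDisjoint
      fun ij => {ω | N ω = ij.1} ∩ {ω | M ω = ij.2} := fun a ha b hb hab =>
    Set.disjoint_left.mpr fun ω hωa hωb =>
      hab ((HasAntidiagonal.antidiagonal_congr ha hb).mpr (hωa.1.symm.trans hωb.1))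
  rw [coeff_pgfSeries, hunion, measureReal_biUnion_finset hdisj, coeff_mul]
  · refine sum_congr rfl fun ij _ => ?_
    simp only [coeff_pgfSeries, measureReal_def, ← ENNReal.toReal_mul]
    exact congrArg ENNReal.toReal
      (h.measure_inter_preimage_eq_mul _ _ (measurableSet_singleton _) (measurableSet_singleton _))
  · exact fun ij _ => (hN (measurableSet_singleton _)).inter (hM (measurableSet_singleton _))

lemma iIndepFun.pgfSeries_sum {ι : Type*} {N : ι → Ω → ℕ} {P : Measure Ω}
    (h_indep : iIndepFun N P) (h_meas : ∀ i, Measurable (N i)) (s : Finset ι) :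
    pgfSeries (∑ i ∈ s, N i) P = ∏ i ∈ s, pgfSeries (N i) P := by
  have : IsProbabilityMeasure P := h_indep.isProbabilityMeasure
  classical
  induction s using Finset.induction_on with
  | empty => simpa using pgfSeries_zero P
  | insert i s hi ih =>
    rw [sum_insert hi, prod_insert hi, ← ih, add_comm, mul_comm,
      IndepFun.pgfSeries_add (by fun_prop) (h_meas i)
        (h_indep.indepFun_finsetSum_of_notMem h_meas hi)]

lemma pgfSeries_eq_shiftedNegBinSeries {N : Ω → ℕ} {P : Measure Ω} {p r : ℝ}
    (hpos : ∀ ω, 0 < N ω)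
    (hlaw : ∀ k : ℕ, 1 ≤ k →
      P.real {ω | N ω = k} = genChoose ((k : ℝ) + r - 2) (k - 1) * (1 - p) ^ r * p ^ (k - 1)) :
    pgfSeries N P = shiftedNegBinSeries p r := by
  refine PowerSeries.ext fun n => ?_
  rw [shiftedNegBinSeries, mul_assoc, coeff_C_mul, coeff_pgfSeries]
  cases n with
  | zero => simp [fun ω => (hpos ω).ne']
  | succ b =>
    rw [hlaw (b + 1) b.succ_pos, coeff_succ_X_mul, coeff_negBinSeries]
    push_cast
    ring_nf

end ProbabilityTheory

theorem esc_nb_number_of_clusters_general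
    {Ω : Type*} [MeasurableSpace Ω] (P : Measure Ω) [IsProbabilityMeasure P]
    (S : ℕ → Ω → ℕ)
    (hmeas : ∀ i, Measurable (S i))
    (hindep : iIndepFun S P)
    (hident : ∀ i, IdentDistrib (S i) (S 0) P P)
    (hpos : ∀ i ω, 0 < S i ω)
    (μ : ℕ → ℝ)
    (hμ : ∀ s, μ s = (P {ω | S 0 ω = s}).toReal)
    (E : ℕ → Set Ω)
    (hE : ∀ n, E n = {ω | ∃ K, ∑ j ∈ Finset.range K, S j ω = n})
    (p r : ℝ) (hp1 : p < 1)
    (hform : ∀ k : ℕ, 1 ≤ k →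
      μ k = genChoose ((k : ℝ) + r - 2) (k - 1) * (1 - p) ^ r * p ^ (k - 1))
    (n k : ℕ) (hkn : k ≤ n) :
    (ProbabilityTheory.cond P (E n) {ω | ∑ j ∈ Finset.range k, S j ω = n}).toReal
      = p ^ (n - k) * (1 - p) ^ (r * k) *
          genChoose ((n : ℝ) + k * (r - 1) - 1) (n - k) / (P (E n)).toReal := by
  have hE_meas : MeasurableSet (E n) := by
    rw [hE n, Set.ofPred_exists]
    exact .iUnion fun K =>
      measurable_sum (range K) (fun j _ => hmeas j) (measurableSet_singleton n)
  have hsub : {ω | ∑ j ∈ range k, S j ω = n} ⊆ E n := hE n ▸ fun ω hω => ⟨k, hω⟩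
  have hpgf : pgfSeries (∑ j ∈ range k, S j) P = shiftedNegBinSeries p r ^ k := by
    rw [hindep.pgfSeries_sum hmeas, prod_congr rfl fun i _ => (hident i).pgfSeries_eq,
      prod_const, card_range,
      pgfSeries_eq_shiftedNegBinSeries (hpos 0) fun s hs => (hμ s).symm.trans (hform s hs)]
  have hnum : (P {ω | ∑ j ∈ range k, S j ω = n}).toReal =
      p ^ (n - k) * ((1 - p) ^ r) ^ k * genChoose (n + k * (r - 1) - 1) (n - k) := by
    rw [← measureReal_def]
    simpa only [coeff_pgfSeries, Finset.sum_apply] using (congrArg (coeff n) hpgf).trans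
      (coeff_shiftedNegBinSeries_pow p r hkn)
  rw [cond_apply hE_meas, Set.inter_eq_self_of_subset_right hsub, ENNReal.toReal_mul,
    ENNReal.toReal_inv, hnum, Real.rpow_mul_natCast (by linarith)]
  ring

/-- If cluster sizes are shifted negative binomial,
`μ_k = C(k+r−2, k−1)(1−p)^r p^{k−1}` for `k ≥ 1` with `p ∈ (0,1)` and `r > 0`, then
for all `1 ≤ k ≤ n`,
`P[K_n = k | E_n] = p^{n−k}(1−p)^{rk} C(n + k(r−1) − 1, n−k) / P[E_n]`. -/
theorem esc_nb_number_of_clusters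
    {Ω : Type*} [MeasurableSpace Ω] (P : Measure Ω) [IsProbabilityMeasure P]
    (S : ℕ → Ω → ℕ)
    (hmeas : ∀ i, Measurable (S i))
    (hindep : iIndepFun S P)
    (hident : ∀ i, IdentDistrib (S i) (S 0) P P)
    (hpos : ∀ i ω, 0 < S i ω)
    (μ : ℕ → ℝ)
    (hμ : ∀ s, μ s = (P {ω | S 0 ω = s}).toReal)
    (E : ℕ → Set Ω)
    (hE : ∀ n, E n = {ω | ∃ K, ∑ j ∈ Finset.range K, S j ω = n})
    (p r : ℝ) (hp0 : 0 < p) (hp1 : p < 1) (hr : 0 < r)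
    (hform : ∀ k : ℕ, 1 ≤ k →
      μ k = genChoose ((k : ℝ) + r - 2) (k - 1) * (1 - p) ^ r * p ^ (k - 1))
    (n k : ℕ) (hk : 1 ≤ k) (hkn : k ≤ n) :
    (ProbabilityTheory.cond P (E n) {ω | ∑ j ∈ Finset.range k, S j ω = n}).toReal
      = p ^ (n - k) * (1 - p) ^ (r * k) *
          genChoose ((n : ℝ) + k * (r - 1) - 1) (n - k) / (P (E n)).toReal :=
  esc_nb_number_of_clusters_general P S hmeas hindep hident hpos μ hμ E hE p r hp1 hform n k hkn
end
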